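/- Let X be a real n×k matrix with singular value decomposition X = U D Vᵀ, where U is an n×k real matrix with UᵀU equal to the k×k identity, V is a k×k real orthogonal matrix, and D is the k×k diagonal matrix with diagonal entries λ₁,…,λ_k. Let y ∈ ℝⁿ, γ ∈ ℝ, and for σ₁ > 0, σ₂ > 0, β ∈ ℝᵏ define q(σ₁,σ₂,β) = σ₁^{−(k+1)} σ₂^{−n} exp( −γ (log σ₁)² − σ₂²/2 − ‖Xβ − y‖²/(2σ₂²) − ‖β‖²/(2σ₁²) ). Set w = VᵀXᵀy, a₂ᵢ = λᵢ²/(2σ₂²) + 1/(2σ₁²), a₁ᵢ = wᵢ/σ₂², a₀ = −yᵀy/(2σ₂²), and q̃(σ₁,σ₂) = σ₁^{−(k+1)} σ₂^{−n} exp( −γ (log σ₁)² − σ₂²/2 + a₀ + ∑_{i=1}^{k} a₁ᵢ²/(4 a₂ᵢ) ) · (2π)^{k/2} · ∏_{i=1}^{k} (2 a₂ᵢ)^{−1/2}. Then for all σ₁, σ₂ > 0 and every index i ∈ {1,…,k}, the Lebesgue integral ∫_{ℝᵏ} (Vᵀβ)ᵢ · q(σ₁,σ₂,β) dβ equals (a₁ᵢ/(2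 a₂ᵢ)) · q̃(σ₁,σ₂). -/

import Mathlib

/-!
Substitute `β = V z`. Since `V` is orthogonal this preserves Lebesgue measure and `‖β‖`, and
since `X V = U D` with `Uᵀ U = 1`, `‖X V z - y‖² = ∑ⱼ λⱼ² zⱼ² - 2 w ⬝ᵥ z + ‖y‖²`. The integrand then
factors into one-dimensional Gaussians `exp (-a₂ⱼ zⱼ² + a₁ⱼ zⱼ)`, of which only the `i`-th carries
the weight `zᵢ`; completing the square shows that this weight contributes the mean `a₁ᵢ / (2 a₂ᵢ)`.
-/

open Matrix MeasureTheory

section Gaussian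

open Real

theorem integral_exp_neg_mul_sq_add_mul {a : ℝ} (ha : 0 < a) (b : ℝ) :
    ∫ x : ℝ, exp (-a * x ^ 2 + b * x) = √(π / a) * exp (b ^ 2 / (4 * a)) := by
  have hsq (x : ℝ) : -a * x ^ 2 + b * x = -a * (x - b / (2 * a)) ^ 2 + b ^ 2 / (4 * a) := by
    field_simp; ring
  simp_rw [hsq, exp_add, integral_mul_const]
  rw [integral_sub_right_eq_self (fun x ↦ exp (-a * x ^ 2)), integral_gaussian]

theorem integral_mul_exp_neg_mul_sq (a : ℝ) : ∫ x : ℝ, x * exp (-a * x ^ 2) = 0 := by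
  have h := integral_neg_eq_self (fun x : ℝ ↦ x * exp (-a * x ^ 2)) volume
  simp only [neg_sq, neg_mul, integral_neg] at h ⊢
  linarith

theorem integral_mul_exp_neg_mul_sq_add_mul {a : ℝ} (ha : 0 < a) (b : ℝ) :
    ∫ x : ℝ, x * exp (-a * x ^ 2 + b * x) = b / (2 * a) * ∫ x : ℝ, exp (-a * x ^ 2 + b * x) := by
  set c := b / (2 * a)
  have hsq (x : ℝ) : -a * x ^ 2 + b * x = -a * (x - c) ^ 2 + b ^ 2 / (4 * a) := by
    simp only [c]; field_simp; ring
  have hshift : ∫ x : ℝ, x * exp (-a * (x - c) ^ 2) = ∫ x : ℝ, (x + c) * exp (-a * x ^ 2) := by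
    simpa only [sub_add_cancel] using
      integral_sub_right_eq_self (fun x ↦ (x + c) * exp (-a * x ^ 2)) c (μ := volume)
  have hgauss := integrable_exp_neg_mul_sq ha
  have hmoment : Integrable fun x : ℝ ↦ x * exp (-a * x ^ 2) := by
    simpa using integrable_mul_exp_neg_mul_sq ha
  simp_rw [hsq, exp_add, ← mul_assoc, integral_mul_const, hshift, add_mul]
  rw [integral_add hmoment (hgauss.const_mul c), integral_mul_exp_neg_mul_sq, integral_const_mul,
    integral_sub_right_eq_self (fun x ↦ exp (-a * x ^ 2))]
  ring

theorem integral_mul_prod_exp_neg_mul_sq_add_mul {ι : Type*} [Fintype ι] {a : ι → ℝ}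
    (ha : ∀ j, 0 < a j) (b : ι → ℝ) (i : ι) :
    ∫ z : ι → ℝ, z i * ∏ j, exp (-a j * z j ^ 2 + b j * z j)
      = b i / (2 * a i) * ∏ j, √(π / a j) * exp (b j ^ 2 / (4 * a j)) := by
  classical
  set g : ι → ℝ → ℝ := fun j t ↦ exp (-a j * t ^ 2 + b j * t)
  have hfactor (z : ι → ℝ) :
      z i * ∏ j, g j (z j) = ∏ j, (if j = i then z j else 1) * g j (z j) := by
    rw [Finset.prod_mul_distrib, Finset.prod_ite_eq']
    simp
  have hfactor_integral (j : ι) : ∫ t, (if j = i then t else 1) * g j t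
      = (if j = i then b i / (2 * a i) else 1) * (√(π / a j) * exp (b j ^ 2 / (4 * a j))) := by
    split_ifs with hj
    · subst hj
      simp only [g]
      rw [integral_mul_exp_neg_mul_sq_add_mul (ha j), integral_exp_neg_mul_sq_add_mul (ha j)]
    · simpa [g] using integral_exp_neg_mul_sq_add_mul (ha j) (b j)
  change ∫ z : ι → ℝ, z i * ∏ j, g j (z j) = _
  simp_rw [hfactor]
  rw [integral_fintype_prod_volume_eq_prod fun j t ↦ (if j = i then t else 1) * g j t]
  simp_rw [hfactor_integral,
    Finset.prod_mul_distrib, Finset.prod_ite_eq', Finset.mem_univ, if_true]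

theorem sqrt_pi_div_eq_sqrt_two_pi_mul_rpow {a : ℝ} (ha : 0 < a) :
    √(π / a) = √(2 * π) * (2 * a) ^ (-(1 / 2 : ℝ)) := by
  rw [← mul_div_mul_left π a two_ne_zero, sqrt_div (by positivity), rpow_neg (by positivity),
    ← sqrt_eq_rpow, div_eq_mul_inv]

theorem prod_sqrt_pi_div_mul_exp {ι : Type*} [Fintype ι] {a : ι → ℝ} (ha : ∀ j, 0 < a j)
    (c : ι → ℝ) :
    ∏ j, √(π / a j) * exp (c j)
      = exp (∑ j, c j) * (2 * π) ^ ((Fintype.card ι : ℝ) / 2) * ∏ j, (2 * a j) ^ (-(1 / 2 : ℝ)) := by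
  simp_rw [sqrt_pi_div_eq_sqrt_two_pi_mul_rpow (ha _), Finset.prod_mul_distrib, Finset.prod_const,
    exp_sum, Finset.card_univ, sqrt_eq_rpow, ← rpow_mul_natCast (by positivity : (0 : ℝ) ≤ 2 * π)]
  ring_nf

end Gaussian

section Orthogonal

variable {ι : Type*} [Fintype ι] [DecidableEq ι]

theorem measurePreserving_mulVec_of_transpose_mul_self {V : Matrix ι ι ℝ} (hV : Vᵀ * V = 1) :
    MeasurePreserving (V *ᵥ ·) volume volume := by
  have hdet : V.det ^ 2 = 1 := by
    simpa [sq, det_mul, det_transpose] using congrArg det hV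
  have habs : |V.det| = 1 :=
    (pow_eq_one_iff_of_nonneg (abs_nonneg _) two_ne_zero).mp (by rw [sq_abs, hdet])
  refine ⟨(Matrix.toLin' V).continuous_of_finiteDimensional.measurable, ?_⟩
  change Measure.map (Matrix.toLin' V) volume = volume
  rw [Real.map_matrix_volume_pi_eq_smul_volume_pi (by aesop), abs_inv, habs]
  simp

theorem integral_comp_mulVec_of_transpose_mul_self {E : Type*} [NormedAddCommGroup E]
    [NormedSpace ℝ E] {V : Matrix ι ι ℝ} (hV : Vᵀ * V = 1) (f : (ι → ℝ) → E) :
    ∫ z, f (V *ᵥ z) = ∫ z, f z := by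
  have hinj : Function.Injective (V *ᵥ ·) := fun z₁ z₂ h ↦ by
    simpa [mulVec_mulVec, hV] using congrArg (Vᵀ *ᵥ ·) h
  have hmp := measurePreserving_mulVec_of_transpose_mul_self hV
  exact hmp.integral_comp (hmp.measurable.measurableEmbedding hinj) f

theorem EuclideanSpace.integral_eq_integral_toLp_mulVec {E : Type*} [NormedAddCommGroup E]
    [NormedSpace ℝ E] {V : Matrix ι ι ℝ} (hV : Vᵀ * V = 1) (f : EuclideanSpace ℝ ι → E) :
    ∫ β, f β = ∫ z : ι → ℝ, f (WithLp.toLp 2 (V *ᵥ z)) := by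
  rw [integral_comp_mulVec_of_transpose_mul_self hV fun z ↦ f (WithLp.toLp 2 z),
    ← (PiLp.volume_preserving_toLp ι).integral_comp (MeasurableEquiv.toLp 2 _).measurableEmbedding]

end Orthogonal

theorem dotProduct_mulVec_mulVec_self {m n R : Type*} [Fintype m] [Fintype n] [CommSemiring R]
    (A : Matrix m n R) (z : n → R) : A *ᵥ z ⬝ᵥ A *ᵥ z = z ⬝ᵥ (Aᵀ * A) *ᵥ z := by
  rw [← mulVec_mulVec, dotProduct_mulVec, mulVec_transpose, dotProduct_comm]

theorem EuclideanSpace.norm_toLp_sq {ι : Type*} [Fintype ι] (v : ι → ℝ) :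
    ‖WithLp.toLp 2 v‖ ^ 2 = v ⬝ᵥ v := by
  rw [← real_inner_self_eq_norm_sq, EuclideanSpace.inner_eq_star_dotProduct, star_trivial]

theorem EuclideanSpace.norm_toLp_mulVec_sq {m n : Type*} [Fintype m] [Fintype n]
    (A : Matrix m n ℝ) (z : n → ℝ) : ‖WithLp.toLp 2 (A *ᵥ z)‖ ^ 2 = z ⬝ᵥ (Aᵀ * A) *ᵥ z := by
  rw [norm_toLp_sq, dotProduct_mulVec_mulVec_self]

theorem EuclideanSpace.norm_toLp_mulVec_sub_sq {m n : Type*} [Fintype m] [Fintype n]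
    (A : Matrix m n ℝ) (z : n → ℝ) (y : EuclideanSpace ℝ m) :
    ‖WithLp.toLp 2 (A *ᵥ z) - y‖ ^ 2 = z ⬝ᵥ (Aᵀ * A) *ᵥ z - 2 * (Aᵀ *ᵥ y ⬝ᵥ z) + y ⬝ᵥ y := by
  rw [← WithLp.toLp_ofLp 2 y, ← WithLp.toLp_sub, norm_toLp_sq, mulVec_transpose,
    ← dotProduct_mulVec, ← dotProduct_mulVec_mulVec_self]
  simp only [sub_dotProduct, dotProduct_sub, dotProduct_comm y.ofLp]
  ring

theorem neg_norm_toLp_mulVec_sub_sq_div_sub_dotProduct_div {m n : Type*} [Fintype m] [Fintype n]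
    [DecidableEq n] {A : Matrix m n ℝ} {d : n → ℝ} (hA : Aᵀ * A = diagonal d)
    (y : EuclideanSpace ℝ m) (z : n → ℝ) {s t : ℝ} (hs : s ≠ 0) (ht : t ≠ 0) :
    -(‖WithLp.toLp 2 (A *ᵥ z) - y‖ ^ 2 / (2 * s ^ 2)) - z ⬝ᵥ z / (2 * t ^ 2)
      = -(y ⬝ᵥ y) / (2 * s ^ 2)
        + ∑ j, (-(d j / (2 * s ^ 2) + 1 / (2 * t ^ 2)) * z j ^ 2 + (Aᵀ *ᵥ y) j / s ^ 2 * z j) := by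
  rw [EuclideanSpace.norm_toLp_mulVec_sub_sq, hA]
  have hsum : ∑ j, (-(d j / (2 * s ^ 2) + 1 / (2 * t ^ 2)) * z j ^ 2 + (Aᵀ *ᵥ y) j / s ^ 2 * z j)
      = -(z ⬝ᵥ diagonal d *ᵥ z) / (2 * s ^ 2) - z ⬝ᵥ z / (2 * t ^ 2)
        + 2 * (Aᵀ *ᵥ y ⬝ᵥ z) / (2 * s ^ 2) := by
    simp only [dotProduct, mulVec_diagonal, neg_div, Finset.sum_div, Finset.mul_sum,
      ← Finset.sum_neg_distrib, ← Finset.sum_sub_distrib, ← Finset.sum_add_distrib]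
    refine Finset.sum_congr rfl fun j _ ↦ ?_
    field_simp
    ring
  rw [hsum]
  ring

theorem transpose_mul_self_eq_diagonal_sq_of_svd {m n R : Type*} [Fintype m] [Fintype n]
    [DecidableEq n] [CommRing R] {X U : Matrix m n R} {V : Matrix n n R} {lam : n → R}
    (hU : Uᵀ * U = 1) (hV : Vᵀ * V = 1) (hX : X = U * diagonal lam * Vᵀ) :
    (X * V)ᵀ * (X * V) = diagonal fun j ↦ lam j ^ 2 := by
  rw [hX, Matrix.mul_assoc, hV, Matrix.mul_one, transpose_mul, diagonal_transpose,
    Matrix.mul_assoc, ← Matrix.mul_assoc Uᵀ, hU, Matrix.one_mul, diagonal_mul_diagonal]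
  simp only [sq]

theorem stmt6_general
    (n k : ℕ)
    (X U : Matrix (Fin n) (Fin k) ℝ)
    (V : Matrix (Fin k) (Fin k) ℝ)
    (lam : Fin k → ℝ)
    (hU : Uᵀ * U = 1)
    (hV₁ : Vᵀ * V = 1)
    (hX : X = U * Matrix.diagonal lam * Vᵀ)
    (y : EuclideanSpace ℝ (Fin n)) (γ : ℝ)
    (σ₁ σ₂ : ℝ) (hσ₁ : 0 < σ₁) (hσ₂ : 0 < σ₂)
    (w : Fin k → ℝ)
    (hw : w = Vᵀ.mulVec (Xᵀ.mulVec y))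
    (a₂ a₁ : Fin k → ℝ) (a₀ : ℝ)
    (ha₂ : ∀ i, a₂ i = lam i ^ 2 / (2 * σ₂ ^ 2) + 1 / (2 * σ₁ ^ 2))
    (ha₁ : ∀ i, a₁ i = w i / σ₂ ^ 2)
    (ha₀ : a₀ = -(y ⬝ᵥ y) / (2 * σ₂ ^ 2))
    (i : Fin k) :
    (∫ β : EuclideanSpace ℝ (Fin k),
        Vᵀ.mulVec β i *
          (σ₁ ^ (-((k : ℤ) + 1)) * σ₂ ^ (-(n : ℤ)) *
            Real.exp (-γ * Real.log σ₁ ^ 2 - σ₂ ^ 2 / 2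
              - ‖(EuclideanSpace.equiv (Fin n) ℝ).symm (X.mulVec β) - y‖ ^ 2 / (2 * σ₂ ^ 2)
              - ‖β‖ ^ 2 / (2 * σ₁ ^ 2))))
      = a₁ i / (2 * a₂ i) *
          (σ₁ ^ (-((k : ℤ) + 1)) * σ₂ ^ (-(n : ℤ)) *
            Real.exp (-γ * Real.log σ₁ ^ 2 - σ₂ ^ 2 / 2 + a₀ + ∑ j, a₁ j ^ 2 / (4 * a₂ j)) *
            (2 * Real.pi) ^ ((k : ℝ) / 2) *
            ∏ j, (2 * a₂ j) ^ (-(1 / 2 : ℝ))) := by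
  have ha₂_pos (j : Fin k) : 0 < a₂ j := by rw [ha₂]; positivity
  have hexponent (z : Fin k → ℝ) :
      -γ * Real.log σ₁ ^ 2 - σ₂ ^ 2 / 2
        - ‖(EuclideanSpace.equiv (Fin n) ℝ).symm ((X * V) *ᵥ z) - y‖ ^ 2 / (2 * σ₂ ^ 2)
        - ‖WithLp.toLp 2 (V *ᵥ z)‖ ^ 2 / (2 * σ₁ ^ 2)
      = (-γ * Real.log σ₁ ^ 2 - σ₂ ^ 2 / 2 + a₀) + ∑ j, (-a₂ j * z j ^ 2 + a₁ j * z j) := by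
    rw [PiLp.coe_symm_continuousLinearEquiv, EuclideanSpace.norm_toLp_mulVec_sq, hV₁, one_mulVec,
      sub_sub, sub_eq_add_neg, neg_add', neg_norm_toLp_mulVec_sub_sq_div_sub_dotProduct_div
        (transpose_mul_self_eq_diagonal_sq_of_svd hU hV₁ hX) y z hσ₂.ne' hσ₁.ne',
      transpose_mul, ← mulVec_mulVec, ← hw, ← ha₀, add_assoc]
    simp only [ha₂, ha₁]
  rw [EuclideanSpace.integral_eq_integral_toLp_mulVec hV₁]
  calc _ = ∫ z : Fin k → ℝ, σ₁ ^ (-((k : ℤ) + 1)) * σ₂ ^ (-(n : ℤ))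
            * Real.exp (-γ * Real.log σ₁ ^ 2 - σ₂ ^ 2 / 2 + a₀)
            * (z i * ∏ j, Real.exp (-a₂ j * z j ^ 2 + a₁ j * z j)) := by
        congr 1 with z
        rw [mulVec_mulVec, hV₁, one_mulVec, WithLp.ofLp_toLp, mulVec_mulVec, hexponent,
          Real.exp_add, Real.exp_sum]
        ring
    _ = _ := by
        rw [integral_const_mul, integral_mul_prod_exp_neg_mul_sq_add_mul ha₂_pos,
          prod_sqrt_pi_div_mul_exp ha₂_pos, Fintype.card_fin,
          Real.exp_add _ (∑ j, a₁ j ^ 2 / (4 * a₂ j))]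
        ring

/-- Theorem 380, first moment of `zᵢ = (Vᵀβ)ᵢ`:
`∫_{ℝᵏ} (Vᵀβ)ᵢ q(σ₁,σ₂,β) dβ = (a₁ᵢ/(2a₂ᵢ)) q̃(σ₁,σ₂)`. -/
theorem stmt6
    (n k : ℕ) (hn : 0 < n) (hk : 0 < k)
    (X U : Matrix (Fin n) (Fin k) ℝ)
    (V : Matrix (Fin k) (Fin k) ℝ)
    (lam : Fin k → ℝ)
    (hU : Uᵀ * U = 1)
    (hV₁ : Vᵀ * V = 1) (hV₂ : V * Vᵀ = 1)
    (hX : X = U * Matrix.diagonal lam * Vᵀ)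
    (y : EuclideanSpace ℝ (Fin n)) (γ : ℝ)
    (σ₁ σ₂ : ℝ) (hσ₁ : 0 < σ₁) (hσ₂ : 0 < σ₂)
    (w : Fin k → ℝ)
    (hw : w = Vᵀ.mulVec (Xᵀ.mulVec y))
    (a₂ a₁ : Fin k → ℝ) (a₀ : ℝ)
    (ha₂ : ∀ i, a₂ i = lam i ^ 2 / (2 * σ₂ ^ 2) + 1 / (2 * σ₁ ^ 2))
    (ha₁ : ∀ i, a₁ i = w i / σ₂ ^ 2)
    (ha₀ : a₀ = -(y ⬝ᵥ y) / (2 * σ₂ ^ 2))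
    (i : Fin k) :
    (∫ β : EuclideanSpace ℝ (Fin k),
        Vᵀ.mulVec β i *
          (σ₁ ^ (-((k : ℤ) + 1)) * σ₂ ^ (-(n : ℤ)) *
            Real.exp (-γ * Real.log σ₁ ^ 2 - σ₂ ^ 2 / 2
              - ‖(EuclideanSpace.equiv (Fin n) ℝ).symm (X.mulVec β) - y‖ ^ 2 / (2 * σ₂ ^ 2)
              - ‖β‖ ^ 2 / (2 * σ₁ ^ 2))))
      = a₁ i / (2 * a₂ i) *
          (σ₁ ^ (-((k : ℤ) + 1)) * σ₂ ^ (-(n : ℤ)) *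
            Real.exp (-γ * Real.log σ₁ ^ 2 - σ₂ ^ 2 / 2 + a₀ + ∑ j, a₁ j ^ 2 / (4 * a₂ j)) *
            (2 * Real.pi) ^ ((k : ℝ) / 2) *
            ∏ j, (2 * a₂ j) ^ (-(1 / 2 : ℝ))) :=
  stmt6_general n k X U V lam hU hV₁ hX y γ σ₁ σ₂ hσ₁ hσ₂ w hw a₂ a₁ a₀ ha₂ ha₁ ha₀ i
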